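/- There exists a (non–locally finite) tiling of a region of ℝ² by convex polygons in which some point is a vertex of exactly one tile. Concretely, the rectangle R with vertices (1,0), (−1,0), (−1,−1), (1,−1), the square S with vertices (0,0), (0,1), (−1,1), (−1,0), and the rectangles T_k with vertices (2^{−k},0), (2^{−k},1), (2^{−k−1},1), (2^{−k−1},0) for k ≥ 0, have pairwise disjoint interiors, their union is [−1,1]×[−1,1], and (0,0) is a vertex of S but of no other tile in this collection. -/

import Mathlib

open Set

noncomputable section

/-- The rectangle `R` with vertices `(1,0), (-1,0), (-1,-1), (1,-1)`. -/
def tileR : Set (ℝ × ℝ) :=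
  convexHull ℝ ({((1 : ℝ), (0 : ℝ)), (-1, 0), (-1, -1), (1, -1)} : Set (ℝ × ℝ))

/-- The square `S` with vertices `(0,0), (0,1), (-1,1), (-1,0)`. -/
def tileS : Set (ℝ × ℝ) :=
  convexHull ℝ ({((0 : ℝ), (0 : ℝ)), (0, 1), (-1, 1), (-1, 0)} : Set (ℝ × ℝ))

/-- The rectangle `T_k` with vertices `(2^{-k},0), (2^{-k},1), (2^{-k-1},1), (2^{-k-1},0)`. -/
def tileT (k : ℕ) : Set (ℝ × ℝ) :=
  convexHull ℝ ({(((1 : ℝ) / 2) ^ k, (0 : ℝ)), (((1 : ℝ) / 2) ^ k, 1),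
    (((1 : ℝ) / 2) ^ (k + 1), 1), (((1 : ℝ) / 2) ^ (k + 1), 0)} : Set (ℝ × ℝ))

/-- The whole (non–locally finite) collection of tiles. -/
def tiles : Set (Set (ℝ × ℝ)) := {tileR, tileS} ∪ Set.range tileT

/-
Every tile is an axis-parallel box, the convex hull of its four corners, so interiors are
products of open intervals and two tiles are separated in one coordinate. The dyadic intervals
`[2^{-k-1}, 2^{-k}]` cover `(0, 1]`, so `S` and the `T_k` fill `[-1, 1] × [0, 1]` and `R` the lower
half. The extreme points of a box are its corners: `(0,0)` is a corner of `S`, the midpoint of an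
edge of `R`, and lies outside every `T_k`.
-/

open Topology

theorem convexHull_prod_pair {𝕜 : Type*} [Field 𝕜] [LinearOrder 𝕜] [IsStrictOrderedRing 𝕜]
    {a b c d : 𝕜} (hab : a ≤ b) (hcd : c ≤ d) :
    convexHull 𝕜 (({a, b} : Set 𝕜) ×ˢ ({c, d} : Set 𝕜)) = Icc a b ×ˢ Icc c d := by
  rw [convexHull_prod, convexHull_pair, convexHull_pair, segment_eq_Icc hab, segment_eq_Icc hcd]

theorem iUnion_Icc_succ_of_antitone {α : Type*} [LinearOrder α] [TopologicalSpace α]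
    [OrderTopology α] {u : ℕ → α} {a : α} (hu : Antitone u) (ha : ∀ k, a < u k)
    (hlim : Filter.Tendsto u Filter.atTop (𝓝 a)) :
    ⋃ k, Icc (u (k + 1)) (u k) = Ioc a (u 0) := by
  refine Subset.antisymm
    (iUnion_subset fun k x hx => ⟨(ha _).trans_le hx.1, hx.2.trans (hu k.zero_le)⟩) ?_
  rintro x ⟨hax, hx0⟩
  -- walk down from an index `n` with `u n < x` until `x ≤ u n`
  obtain ⟨n, hn⟩ := (hlim.eventually (gt_mem_nhds hax)).exists
  induction n with
  | zero => exact absurd hx0 hn.not_ge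
  | succ n ih =>
    rcases lt_or_ge (u n) x with h | h
    · exact ih h
    · exact mem_iUnion.2 ⟨n, hn.le, h⟩

theorem tileR_eq : tileR = Icc (-1 : ℝ) 1 ×ˢ Icc (-1 : ℝ) 0 := by
  rw [tileR, show ({((1 : ℝ), (0 : ℝ)), (-1, 0), (-1, -1), (1, -1)} : Set (ℝ × ℝ)) =
    ({-1, 1} : Set ℝ) ×ˢ ({-1, 0} : Set ℝ) by ext ⟨x, y⟩; simp [Prod.ext_iff]; tauto]
  exact convexHull_prod_pair (by norm_num) (by norm_num)

theorem tileS_eq : tileS = Icc (-1 : ℝ) 0 ×ˢ Icc (0 : ℝ) 1 := by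
  rw [tileS, show ({((0 : ℝ), (0 : ℝ)), (0, 1), (-1, 1), (-1, 0)} : Set (ℝ × ℝ)) =
    ({-1, 0} : Set ℝ) ×ˢ ({0, 1} : Set ℝ) by ext ⟨x, y⟩; simp [Prod.ext_iff]; tauto]
  exact convexHull_prod_pair (by norm_num) (by norm_num)

theorem tileT_eq (k : ℕ) :
    tileT k = Icc (((1 : ℝ) / 2) ^ (k + 1)) (((1 : ℝ) / 2) ^ k) ×ˢ Icc (0 : ℝ) 1 := by
  rw [tileT, show ({(((1 : ℝ) / 2) ^ k, (0 : ℝ)), (((1 : ℝ) / 2) ^ k, 1),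
      (((1 : ℝ) / 2) ^ (k + 1), 1), (((1 : ℝ) / 2) ^ (k + 1), 0)} : Set (ℝ × ℝ)) =
    ({((1 : ℝ) / 2) ^ (k + 1), ((1 : ℝ) / 2) ^ k} : Set ℝ) ×ˢ ({0, 1} : Set ℝ) by
      ext ⟨x, y⟩; simp [Prod.ext_iff]; tauto]
  exact convexHull_prod_pair (pow_le_pow_of_le_one (by norm_num) (by norm_num) k.le_succ)
    (by norm_num)

theorem half_pow_antitone : Antitone fun k : ℕ => ((1 : ℝ) / 2) ^ k :=
  pow_right_anti₀ (by norm_num) (by norm_num)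

theorem iUnion_tileT : ⋃ k, tileT k = Ioc (0 : ℝ) 1 ×ˢ Icc (0 : ℝ) 1 := by
  simp_rw [tileT_eq, ← iUnion_prod_const]
  rw [iUnion_Icc_succ_of_antitone half_pow_antitone (fun k => by positivity)
    (tendsto_pow_atTop_nhds_zero_of_lt_one (by norm_num) (by norm_num)), pow_zero]

theorem sUnion_tiles : ⋃₀ tiles = Icc ((-1 : ℝ), (-1 : ℝ)) ((1 : ℝ), (1 : ℝ)) := by
  rw [tiles, sUnion_union, sUnion_pair, sUnion_range, iUnion_tileT, tileR_eq, tileS_eq,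
    union_assoc, ← union_prod, Icc_union_Ioc_eq_Icc (by norm_num) (by norm_num), ← prod_union,
    Icc_union_Icc_eq_Icc (by norm_num) (by norm_num), Icc_prod_Icc]

open Function in
theorem pairwise_disjoint_interior_tiles : tiles.Pairwise (Disjoint on interior) := by
  have hT : Pairwise ((Disjoint on interior) on tileT) := fun j k hjk => by
    simp only [onFun, tileT_eq, interior_prod_eq, interior_Icc, disjoint_prod]
    exact Or.inl (half_pow_antitone.pairwise_disjoint_on_Ioo_succ hjk)
  rw [tiles, pairwise_union_of_symm, pairwise_pair_of_symm]
  refine ⟨fun _ => ?_, hT.range_pairwise, ?_⟩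
  · simp only [onFun, tileR_eq, tileS_eq, interior_prod_eq, interior_Icc, disjoint_prod,
      Ioo_disjoint_Ioo]
    norm_num
  · rintro _ (rfl | rfl) _ ⟨k, rfl⟩ -
    all_goals simp only [onFun, tileR_eq, tileS_eq, tileT_eq, interior_prod_eq, interior_Icc,
      disjoint_prod, Ioo_disjoint_Ioo]
    · norm_num
    · exact Or.inl ((min_le_left _ _).trans (le_max_of_le_right (by positivity)))

theorem zero_mem_extremePoints_tileS : ((0 : ℝ), (0 : ℝ)) ∈ extremePoints ℝ tileS := by
  rw [tileS_eq, extremePoints_prod, extremePoints_Icc (by norm_num),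
    extremePoints_Icc (by norm_num)]
  simp

theorem zero_notMem_extremePoints_tileR : ((0 : ℝ), (0 : ℝ)) ∉ extremePoints ℝ tileR := by
  rw [tileR_eq, extremePoints_prod, extremePoints_Icc (by norm_num),
    extremePoints_Icc (by norm_num)]
  simp

theorem zero_notMem_tileT (k : ℕ) : ((0 : ℝ), (0 : ℝ)) ∉ tileT k := by
  rw [tileT_eq]
  simp

/-- A non–locally finite tiling of `[-1,1] × [-1,1]` by convex polygons in which the
point `(0,0)` is a vertex of exactly one tile (namely, of `tileS`): the tiles have
pairwise disjoint interiors, their union is `[-1,1] × [-1,1]`, and `(0,0)` is an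
extreme point of `tileS` but of no other tile. -/
theorem lonely_vertex_non_locally_finite :
    (∀ A ∈ tiles, ∀ B ∈ tiles, A ≠ B → interior A ∩ interior B = ∅) ∧
    ⋃₀ tiles = Set.Icc ((-1 : ℝ), (-1 : ℝ)) ((1 : ℝ), (1 : ℝ)) ∧
    ((0 : ℝ), (0 : ℝ)) ∈ extremePoints ℝ tileS ∧
    ∀ A ∈ tiles, A ≠ tileS → ((0 : ℝ), (0 : ℝ)) ∉ extremePoints ℝ A := by
  refine ⟨fun A hA B hB hAB => (pairwise_disjoint_interior_tiles hA hB hAB).inter_eq,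
    sUnion_tiles, zero_mem_extremePoints_tileS, ?_⟩
  rintro A ((rfl | rfl) | ⟨k, rfl⟩) hA
  · exact zero_notMem_extremePoints_tileR
  · exact absurd rfl hA
  · exact fun h => zero_notMem_tileT k h.1
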